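/- If F: B^n → B^n is bijective, then for the simple sequential update schedule W = ({0},...,{n-1}), every vertex of G_NECC(F,W) has degree at most 2^{⌈n/2⌉+1} − 2, hence χ(G_NECC(F,W)) ≤ 2^{⌈n/2⌉+1} − 1 and κ(F,W) ≤ n/2 + 1. -/

import Mathlib

/-- A configuration of a Boolean automata network of size `n`. -/
abbrev Conf (n : ℕ) := Fin n → Bool

/-- `F_I`: update simultaneously exactly the automata in `I`. -/
def updSet {n : ℕ} (F : Conf n → Conf n) (I : Finset (Fin n)) (x : Conf n) : Conf n :=
  fun i => if i ∈ I then F x i else x i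

/-- `W_{<j}`: union of the first `j` blocks of the schedule `W`. -/
def prefUnion {n : ℕ} (W : List (Finset (Fin n))) (j : ℕ) : Finset (Fin n) :=
  (W.take j).foldr (· ∪ ·) ∅

/-- `W` is a block-sequential update schedule: an ordered partition of the automata. -/
def isSchedule {n : ℕ} (W : List (Finset (Fin n))) : Prop :=
  (∀ B ∈ W, B.Nonempty) ∧ W.Pairwise Disjoint ∧ W.foldr (· ∪ ·) ∅ = Finset.univ

/-- Confusable configurations: identical after updating the first `i` blocks, some `i ∈ [0,p]`. -/
def confusable {n : ℕ} (F : Conf n → Conf n) (W : List (Finset (Fin n))) (x x' : Conf n) : Prop :=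
  ∃ i ≤ W.length, updSet F (prefUnion W i) x = updSet F (prefUnion W i) x'

/-- `CC(x,x')`: the set of steps making `x` and `x'` confusable. -/
def CCset {n : ℕ} (F : Conf n → Conf n) (W : List (Finset (Fin n))) (x x' : Conf n) : Set ℕ :=
  {i | i ≤ W.length ∧ updSet F (prefUnion W i) x = updSet F (prefUnion W i) x'}

/-- The `G_NECC` graph: edges between non-equivalent confusable configurations. -/
def gnecc {n : ℕ} (F : Conf n → Conf n) (W : List (Finset (Fin n))) :
    SimpleGraph (Conf n) where
  Adj x x' := F x ≠ F x' ∧ confusable F W x x'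
  symm := by
    constructor
    rintro x x' ⟨hne, i, hi, h⟩
    exact ⟨hne.symm, i, hi, h.symm⟩
  loopless := by constructor; rintro x ⟨hne, _⟩; exact hne rfl

/-- `F^W`: apply the blocks of `W` sequentially. -/
def runSched {n : ℕ} (F : Conf n → Conf n) (W : List (Finset (Fin n))) (x : Conf n) : Conf n :=
  W.foldl (fun y B => updSet F B y) x

/-- `W(i)`: the index of the block of `W` containing `i`. -/
def stepOf {n : ℕ} (W : List (Finset (Fin n))) (i : Fin n) : ℕ :=
  W.findIdx (fun B => decide (i ∈ B))

/-- `W' ∈ E_h(W,V')`: `W'` extends `W`, preserving the update order via `h`. -/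
def extendsSched {n m : ℕ} (W : List (Finset (Fin n))) (W' : List (Finset (Fin m)))
    (h : Fin n → Fin m) : Prop :=
  ∀ i i' : Fin n, (stepOf W i ≤ stepOf W i' ↔ stepOf W' (h i) ≤ stepOf W' (h i'))

/-- `(F',W')` `h`-simulates `(F,[V])`: `φ_h ∘ F'^{W'} = F ∘ φ_h`. -/
def simulates {n m : ℕ} (F' : Conf m → Conf m) (W' : List (Finset (Fin m)))
    (F : Conf n → Conf n) (h : Fin n → Fin m) : Prop :=
  ∀ z : Conf m, (fun i => runSched F' W' z (h i)) = F (fun i => z (h i))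

/-- `κ(F,W)`: minimal number of additional automata needed to simulate `(F,[V])`
with a schedule extending `W` order-preservingly. -/
noncomputable def kappa {n : ℕ} (F : Conf n → Conf n) (W : List (Finset (Fin n))) : ℕ :=
  sInf {k | ∃ h : Fin n → Fin (n + k), Function.Injective h ∧
    ∃ W' : List (Finset (Fin (n + k))), isSchedule W' ∧ extendsSched W W' h ∧
      ∃ F' : Conf (n + k) → Conf (n + k), simulates F' W' F h}

/-- The simple sequential update schedule `({0},{1},…,{n-1})`. -/
def seqSched (n : ℕ) : List (Finset (Fin n)) := (List.finRange n).map (fun i => {i})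

/-!
If `x` and `y` are confusable at step `j` of the sequential schedule, they agree on the
coordinates `≥ j` while `F x` and `F y` agree on the coordinates `< j`. Splitting at `s = ⌊n/2⌋`,
a neighbour of `x` in `G_NECC` is one of the `2^s - 1` other configurations agreeing with `x`
from `s` on, or, `F` being injective, one of the `2^(n-s-1) - 1` others whose image agrees with
`F x` up to `s`. All degrees are therefore below `2^(s+1) - 1`, and a greedy colouring uses at
most `2^(s+1) - 1` colours.

A proper colouring `C` with `2^(s+1)` colours yields a simulation with `s + 1` extra automata:
they are updated first and store `C x`, after which automaton `i` is updated at step `i`, seeing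
the partial update of `x` at step `i` together with `C x`. Any `y` with the same partial state and
colour is confusable with `x`, hence `F y = F x` since `C` is proper, so `F y i` is the right value.
-/

theorem ncard_setOf_eqOn_compl_le {ι α : Type*} [Finite α] (I : Finset ι) (x : ι → α) :
    {y : ι → α | ∀ i ∉ I, y i = x i}.ncard ≤ Nat.card α ^ I.card := by
  have hinj : Set.InjOn (fun y (i : I) => y i) {y : ι → α | ∀ i ∉ I, y i = x i} := by
    intro y hy y' hy' h
    funext i
    by_cases hi : i ∈ I
    · exact congrFun h ⟨i, hi⟩
    · rw [hy i hi, hy' i hi]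
  calc _ ≤ (Set.univ : Set (I → α)).ncard :=
        Set.ncard_le_ncard_of_injOn _ (fun _ _ => Set.mem_univ _) hinj
    _ = Nat.card α ^ I.card := by simp [Set.ncard_univ, Nat.card_fun]

theorem Fin.card_filter_lt_val {n s : ℕ} :
    (Finset.univ.filter fun i : Fin n => s < i).card = n - (s + 1) := by
  have h := Finset.card_filter_add_card_filter_not (s := Finset.univ) fun i : Fin n => s < i
  simp only [not_lt, Finset.card_univ, Fintype.card_fin] at h
  have h' : (Finset.univ.filter fun i : Fin n => (i : ℕ) ≤ s).card = min n (s + 1) := by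
    simpa [Nat.lt_succ_iff] using Fin.card_filter_val_lt (n := n) (m := s + 1)
  omega

theorem Fin.natAdd_ne_castAdd {n k : ℕ} (e : Fin k) (i : Fin n) :
    Fin.natAdd n e ≠ Fin.castAdd k i := by
  rw [Ne, Fin.ext_iff, Fin.val_natAdd, Fin.val_castAdd]
  omega

theorem List.findIdx_finRange_eq {n : ℕ} (i : Fin n) :
    (List.finRange n).findIdx (fun j => decide (i = j)) = i := by
  rw [← List.idxOf_finRange i, List.idxOf]
  congr
  funext j
  by_cases h : i = j
  · simp [h]
  · simp [h, Ne.symm h]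

theorem List.mem_take_finRange {n j : ℕ} {i : Fin n} :
    i ∈ (List.finRange n).take j ↔ (i : ℕ) < j := by
  simp [List.mem_take_iff_getElem, Fin.ext_iff]

theorem List.foldl_eq_of_forall_getElem {α σ : Type*} (step : σ → α → σ) (L : List α)
    (S : ℕ → σ) (h : ∀ j (hj : j < L.length), step (S j) L[j] = S (j + 1)) :
    L.foldl step (S 0) = S L.length := by
  induction L generalizing S with
  | nil => rfl
  | cons a L ih =>
    rw [List.foldl_cons, show step (S 0) a = S 1 from h 0 (Nat.zero_lt_succ _)]
    exact ih (fun j => S (j + 1)) fun j hj => h (j + 1) (Nat.succ_lt_succ hj)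

theorem mem_foldr_union {α : Type*} [DecidableEq α] {L : List (Finset α)} {a : α} :
    a ∈ L.foldr (· ∪ ·) ∅ ↔ ∃ B ∈ L, a ∈ B := by
  induction L <;> simp [*]

theorem SimpleGraph.colorable_of_forall_ncard_neighborSet_lt {V : Type*} [Finite V]
    (G : SimpleGraph V) {d : ℕ} (h : ∀ v, (G.neighborSet v).ncard < d) : G.Colorable d := by
  classical
  have : Fintype V := Fintype.ofFinite V
  suffices ∀ s : Finset V, ∃ f : V → Fin d, ∀ a ∈ s, ∀ b ∈ s, G.Adj a b → f a ≠ f b by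
    obtain ⟨f, hf⟩ := this Finset.univ
    exact ⟨Coloring.mk f fun hab => hf _ (Finset.mem_univ _) _ (Finset.mem_univ _) hab⟩
  intro s
  induction s using Finset.induction_on with
  | empty => exact ⟨fun v => ⟨0, Nat.zero_lt_of_lt (h v)⟩, by simp⟩
  | insert v s hv ih =>
    obtain ⟨f, hf⟩ := ih
    obtain ⟨c, -, hc⟩ : ∃ c, c ∈ Set.univ ∧ c ∉ f '' G.neighborSet v := by
      refine Set.exists_mem_notMem_of_ncard_lt_ncard ?_
      calc (f '' G.neighborSet v).ncard ≤ (G.neighborSet v).ncard := Set.ncard_image_le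
        _ < d := h v
        _ = (Set.univ : Set (Fin d)).ncard := by simp
    have hfree : ∀ b, G.Adj v b → f b ≠ c := fun b hb hfb => hc ⟨b, hb, hfb⟩
    refine ⟨Function.update f v c, ?_⟩
    simp only [Finset.mem_insert]
    rintro a (rfl | ha) b (rfl | hb) hab
    · exact absurd rfl hab.ne
    · rw [Function.update_self, Function.update_of_ne hab.ne.symm]
      exact (hfree b hab).symm
    · rw [Function.update_self, Function.update_of_ne hab.ne]
      exact hfree a hab.symm
    · rw [Function.update_of_ne (ne_of_mem_of_not_mem ha hv),
        Function.update_of_ne (ne_of_mem_of_not_mem hb hv)]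
      exact hf a ha b hb hab

theorem mem_prefUnion_seqSched {n j : ℕ} {i : Fin n} :
    i ∈ prefUnion (seqSched n) j ↔ (i : ℕ) < j := by
  simp [prefUnion, seqSched, ← List.map_take, mem_foldr_union, List.mem_take_finRange]

theorem updSet_prefUnion_seqSched_apply {n : ℕ} (F : Conf n → Conf n) (j : ℕ) (x : Conf n)
    (i : Fin n) :
    updSet F (prefUnion (seqSched n) j) x i = if (i : ℕ) < j then F x i else x i := by
  simp only [updSet, mem_prefUnion_seqSched]

theorem stepOf_seqSched {n : ℕ} (i : Fin n) : stepOf (seqSched n) i = i := by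
  simpa [stepOf, seqSched, List.findIdx_map, Function.comp_def] using List.findIdx_finRange_eq i

theorem neighborSet_gnecc_seqSched_subset {n : ℕ} (F : Conf n → Conf n) (x : Conf n) (s : ℕ) :
    (gnecc F (seqSched n)).neighborSet x ⊆
      ({y | ∀ i : Fin n, s ≤ i → y i = x i} ∪
        F ⁻¹' {z | ∀ i : Fin n, i ≤ s → z i = F x i}) \ {x} := by
  rintro y ⟨hne, j, -, hj⟩
  refine ⟨?_, fun hy => hne (congrArg F hy).symm⟩
  have hagree (i : Fin n) := congrFun hj i
  simp only [updSet_prefUnion_seqSched_apply] at hagree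
  by_cases hjs : j ≤ s
  · refine Or.inl fun i hi => ?_
    simpa [if_neg (show ¬(i : ℕ) < j by omega)] using (hagree i).symm
  · refine Or.inr fun i hi => ?_
    simpa [if_pos (show (i : ℕ) < j by omega)] using (hagree i).symm

theorem ncard_neighborSet_gnecc_seqSched_le {n : ℕ} {F : Conf n → Conf n}
    (hF : Function.Injective F) (x : Conf n) (s : ℕ) :
    ((gnecc F (seqSched n)).neighborSet x).ncard ≤ 2 ^ s + 2 ^ (n - (s + 1)) - 2 := by
  set A := {y : Conf n | ∀ i : Fin n, s ≤ i → y i = x i}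
  set B := {z : Conf n | ∀ i : Fin n, i ≤ s → z i = F x i}
  have hA : A.ncard ≤ 2 ^ s := by
    calc A.ncard ≤ {y | ∀ i ∉ Finset.univ.filter fun i : Fin n => i < s, y i = x i}.ncard :=
          Set.ncard_le_ncard fun y hy i hi => hy i (by simpa using hi)
      _ ≤ 2 ^ s := (ncard_setOf_eqOn_compl_le _ x).trans ?_
    simpa [Fin.card_filter_val_lt] using Nat.pow_le_pow_right two_pos (min_le_right n s)
  have hB : (F ⁻¹' B).ncard ≤ 2 ^ (n - (s + 1)) := by
    calc (F ⁻¹' B).ncard ≤ B.ncard :=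
          Set.ncard_le_ncard_of_injOn F (fun _ hy => hy) hF.injOn
      _ ≤ {z | ∀ i ∉ Finset.univ.filter fun i : Fin n => s < i, z i = F x i}.ncard :=
          Set.ncard_le_ncard fun y hy i hi => hy i (by simpa using hi)
      _ ≤ 2 ^ (n - (s + 1)) :=
          (ncard_setOf_eqOn_compl_le _ (F x)).trans_eq (by simp [Fin.card_filter_lt_val])
  have hx : x ∈ A ∩ F ⁻¹' B := ⟨fun _ _ => rfl, fun _ _ => rfl⟩
  have hunion := Set.ncard_union_add_ncard_inter A (F ⁻¹' B)
  have hinter : 0 < (A ∩ F ⁻¹' B).ncard := (Set.ncard_pos).mpr ⟨x, hx⟩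
  calc _ ≤ ((A ∪ F ⁻¹' B) \ {x}).ncard :=
        Set.ncard_le_ncard (neighborSet_gnecc_seqSched_subset F x s)
    _ = (A ∪ F ⁻¹' B).ncard - 1 := Set.ncard_sdiff_singleton_of_mem (Or.inl hx.1)
    _ ≤ 2 ^ s + 2 ^ (n - (s + 1)) - 2 := by omega

def extSched (n k : ℕ) : List (Finset (Fin (n + k))) :=
  Finset.univ.map (Fin.natAddEmb n) :: (List.finRange n).map fun i => {Fin.castAdd k i}

theorem stepOf_extSched {n k : ℕ} (i : Fin n) :
    stepOf (extSched n k) (Fin.castAdd k i) = i + 1 := by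
  simpa [stepOf, extSched, List.findIdx_cons, List.findIdx_map, Function.comp_def,
    Fin.natAdd_ne_castAdd] using List.findIdx_finRange_eq i

theorem isSchedule_extSched {n k : ℕ} (hk : 0 < k) : isSchedule (extSched n k) := by
  refine ⟨?_, ?_, ?_⟩
  · simp [extSched, Fin.pos_iff_nonempty.mp hk]
  · simp only [extSched, List.pairwise_cons, List.mem_map, List.pairwise_map]
    refine ⟨?_, (List.nodup_finRange n).imp fun hij => by simpa using hij⟩
    rintro _ ⟨i, -, rfl⟩
    simp [Fin.natAdd_ne_castAdd]
  · refine Finset.eq_univ_of_forall fun w => mem_foldr_union.mpr ?_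
    induction w using Fin.addCases with
    | left i => exact ⟨_, List.mem_cons_of_mem _ (List.mem_map_of_mem (List.mem_finRange i)),
        Finset.mem_singleton_self _⟩
    | right e => exact ⟨_, List.mem_cons_self, Finset.mem_map_of_mem _ (Finset.mem_univ e)⟩

theorem extendsSched_extSched {n k : ℕ} :
    extendsSched (seqSched n) (extSched n k) (Fin.castAdd k) := by
  intro i i'
  rw [stepOf_seqSched, stepOf_seqSched, stepOf_extSched, stepOf_extSched]
  omega

section Decoding

variable {n k : ℕ} {F : Conf n → Conf n} (C : (gnecc F (seqSched n)).Coloring (Fin k → Bool))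

theorem apply_eq_of_coloring_eq {j : ℕ} (hj : j ≤ n) {x y : Conf n} (hc : C x = C y)
    (hxy : updSet F (prefUnion (seqSched n) j) x = updSet F (prefUnion (seqSched n) j) y) :
    F x = F y := by
  by_contra hne
  exact C.valid ⟨hne, j, by simpa [seqSched] using hj, hxy⟩ hc

noncomputable def decodingNet (z : Conf (n + k)) : Conf (n + k) :=
  Fin.append
    (fun i => F (Classical.epsilon fun y => C y = (fun e => z (Fin.natAdd n e)) ∧
      updSet F (prefUnion (seqSched n) i) y = fun i' => z (Fin.castAdd k i')) i)
    (C fun i => z (Fin.castAdd k i))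

def decodingState (j : ℕ) (x : Conf n) : Conf (n + k) :=
  Fin.append (updSet F (prefUnion (seqSched n) j) x) (C x)

theorem updSet_decodingNet_colorBlock (z : Conf (n + k)) :
    updSet (decodingNet C) (Finset.univ.map (Fin.natAddEmb n)) z =
      decodingState C 0 fun i => z (Fin.castAdd k i) := by
  funext w
  induction w using Fin.addCases with
  | left i => simp [updSet, decodingState, Fin.natAdd_ne_castAdd, mem_prefUnion_seqSched]
  | right e => simp [updSet, decodingState, decodingNet]

theorem decodingNet_decodingState_castAdd (i : Fin n) (x : Conf n) :
    decodingNet C (decodingState C i x) (Fin.castAdd k i) = F x i := by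
  have hy := Classical.epsilon_spec (p := fun y => C y = C x ∧
    updSet F (prefUnion (seqSched n) i) y = updSet F (prefUnion (seqSched n) i) x) ⟨x, rfl, rfl⟩
  simp only [decodingNet, decodingState, Fin.append_left, Fin.append_right]
  exact congrFun (apply_eq_of_coloring_eq C i.2.le hy.1 hy.2) i

theorem updSet_decodingNet_step (j : Fin n) (x : Conf n) :
    updSet (decodingNet C) {Fin.castAdd k j} (decodingState C j x) =
      decodingState C (j + 1) x := by
  funext w
  rw [updSet]
  induction w using Fin.addCases with
  | left i =>
    by_cases hi : i = j
    · subst hi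
      rw [if_pos (Finset.mem_singleton_self _), decodingNet_decodingState_castAdd]
      simp [decodingState, updSet_prefUnion_seqSched_apply]
    · have hi' : (i : ℕ) ≠ j := Fin.val_ne_of_ne hi
      simp [decodingState, updSet_prefUnion_seqSched_apply, hi, hi', le_iff_lt_or_eq]
  | right e => simp [decodingState, Fin.natAdd_ne_castAdd]

theorem runSched_decodingNet (z : Conf (n + k)) :
    runSched (decodingNet C) (extSched n k) z = decodingState C n fun i => z (Fin.castAdd k i) := by
  rw [runSched, extSched, List.foldl_cons, updSet_decodingNet_colorBlock, List.foldl_map]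
  simpa using List.foldl_eq_of_forall_getElem _ (List.finRange n) (decodingState C · _)
    fun j hj => by rw [List.getElem_finRange]; exact updSet_decodingNet_step C _ _

theorem decodingNet_simulates : simulates (decodingNet C) (extSched n k) F (Fin.castAdd k) := by
  intro z
  funext i
  simp [runSched_decodingNet, decodingState, updSet_prefUnion_seqSched_apply]

end Decoding

theorem kappa_seqSched_le_of_colorable {n k : ℕ} {F : Conf n → Conf n} (hk : 0 < k)
    (h : (gnecc F (seqSched n)).Colorable (2 ^ k)) : kappa F (seqSched n) ≤ k :=
  Nat.sInf_le ⟨Fin.castAdd k, Fin.castAdd_injective n k, extSched n k, isSchedule_extSched hk,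
    extendsSched_extSched, decodingNet (h.toColoring (by simp)), decodingNet_simulates _⟩

theorem stmt16 {n : ℕ} (F : Conf n → Conf n) (hF : Function.Bijective F) :
    (∀ x : Conf n,
        ((gnecc F (seqSched n)).neighborSet x).ncard ≤ 2 ^ ((n + 1) / 2 + 1) - 2) ∧
    (gnecc F (seqSched n)).chromaticNumber ≤ ((2 ^ ((n + 1) / 2 + 1) - 1 : ℕ) : ℕ∞) ∧
    (kappa F (seqSched n) : ℝ) ≤ (n : ℝ) / 2 + 1 := by
  set m := n / 2
  have hsplit : 2 ^ m + 2 ^ (n - (m + 1)) ≤ 2 ^ (m + 1) := by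
    have := Nat.pow_le_pow_right two_pos (show n - (m + 1) ≤ m by omega)
    rw [pow_succ]
    omega
  have hdeg (x : Conf n) : ((gnecc F (seqSched n)).neighborSet x).ncard ≤ 2 ^ (m + 1) - 2 :=
    (ncard_neighborSet_gnecc_seqSched_le hF.injective x m).trans (by omega)
  have hceil : 2 ^ (m + 1) ≤ 2 ^ ((n + 1) / 2 + 1) := Nat.pow_le_pow_right two_pos (by omega)
  have hcol : (gnecc F (seqSched n)).Colorable (2 ^ (m + 1) - 1) :=
    SimpleGraph.colorable_of_forall_ncard_neighborSet_lt _ fun x =>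
      (hdeg x).trans_lt (by have := Nat.one_lt_two_pow m.succ_ne_zero; omega)
  refine ⟨fun x => (hdeg x).trans (by omega), ?_, ?_⟩
  · exact (hcol.mono (by omega)).chromaticNumber_le
  · have hk := kappa_seqSched_le_of_colorable m.succ_pos (hcol.mono (Nat.sub_le _ _))
    calc (kappa F (seqSched n) : ℝ) ≤ (m + 1 : ℕ) := by exact_mod_cast hk
      _ ≤ n / 2 + 1 := by push_cast; linarith [Nat.cast_div_le (α := ℝ) (m := n) (n := 2)]
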